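/- arXiv:2512.10845 — 2 statements merged into one kernel-verified Lean document; each statement's English description precedes it below -/
import Mathlib

section
/- Let P be an m×m Hermitian matrix and β an m×m positive definite Hermitian matrix, with generalized eigenvalues γ₁ ≤ ... ≤ γ_m of P with respect to β (i.e., the eigenvalues of β^{-1/2} P β^{-1/2}). If the sum of any m-k+1 of the γ_j is positive, then P has at least k positive eigenvalues. -/
open Matrix ComplexOrder

noncomputable def Matrix.PosSemidef.sqrt {n 𝕜 : Type*} [Fintype n] [RCLike 𝕜] [DecidableEq n]
    {A : Matrix n n 𝕜} (hA : A.PosSemidef) : Matrix n n 𝕜 :=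
  hA.1.eigenvectorUnitary.1 * diagonal ((↑) ∘ Real.sqrt ∘ hA.1.eigenvalues) *
    (star hA.1.eigenvectorUnitary : Matrix n n 𝕜)

lemma Matrix.PosSemidef.sqrt_mul_self {n 𝕜 : Type*} [Fintype n] [RCLike 𝕜] [DecidableEq n]
    {A : Matrix n n 𝕜} (hA : A.PosSemidef) : hA.sqrt * hA.sqrt = A := by
  have hU : (star hA.1.eigenvectorUnitary : Matrix n n 𝕜) * hA.1.eigenvectorUnitary.1 = 1 :=
    Unitary.star_mul_self_of_mem hA.1.eigenvectorUnitary.2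
  have hD : diagonal ((↑) ∘ Real.sqrt ∘ hA.1.eigenvalues) *
      diagonal ((↑) ∘ Real.sqrt ∘ hA.1.eigenvalues) = diagonal (RCLike.ofReal ∘ hA.1.eigenvalues : n → 𝕜) := by
    rw [diagonal_mul_diagonal]
    congr 1; ext i
    simp only [Function.comp_apply, ← RCLike.ofReal_mul]
    rw [Real.mul_self_sqrt (hA.eigenvalues_nonneg i)]
  conv_rhs => rw [hA.1.spectral_theorem, Unitary.conjStarAlgAut_apply]
  simp only [Matrix.PosSemidef.sqrt]
  rw [show ∀ a b c d e f : Matrix n n 𝕜, a * b * c * (d * e * f) = a * (b * (c * d) * e) * f by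
    intros; simp only [mul_assoc], hU, mul_one, hD]

lemma Matrix.PosSemidef.sqrt_isHermitian {n 𝕜 : Type*} [Fintype n] [RCLike 𝕜] [DecidableEq n]
    {A : Matrix n n 𝕜} (hA : A.PosSemidef) : hA.sqrt.IsHermitian := by
  simp only [IsHermitian, Matrix.PosSemidef.sqrt, conjTranspose_mul, diagonal_conjTranspose]
  rw [← star_eq_conjTranspose, ← star_eq_conjTranspose, star_star, ← mul_assoc]
  congr 2
  ext i j
  simp [diagonal_apply]

variable {m : ℕ}

noncomputable def coordSub (S : Finset (Fin m)) : Submodule ℂ (Fin m → ℂ) :=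
  Submodule.span ℂ (Set.range fun i : S => (Pi.single (i : Fin m) (1 : ℂ) : Fin m → ℂ))

lemma coordSub_finrank (S : Finset (Fin m)) : Module.finrank ℂ (coordSub S) = S.card := by
  have hli : LinearIndependent ℂ
      (fun i : S => (Pi.single (i : Fin m) (1 : ℂ) : Fin m → ℂ)) := by
    have h2 := (Pi.basisFun ℂ (Fin m)).linearIndependent.comp
      (fun i : S => (i : Fin m)) Subtype.val_injective
    convert h2 with i
    simp [Pi.basisFun_apply]
  rw [coordSub, finrank_span_eq_card hli, Fintype.card_coe]

lemma coordSub_apply_eq_zero {S : Finset (Fin m)} {x : Fin m → ℂ} (hx : x ∈ coordSub S)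
    {j : Fin m} (hj : j ∉ S) : x j = 0 := by
  induction hx using Submodule.span_induction with
  | mem y hy =>
    obtain ⟨i, rfl⟩ := hy
    have hji : j ≠ (i : Fin m) := fun h => hj (by rw [h]; exact i.2)
    exact Pi.single_eq_of_ne hji 1
  | zero => rfl
  | add a b _ _ ha hb => simp [ha, hb]
  | smul c a _ ha => simp [ha]

noncomputable def mulVecEquiv (Q R : Matrix (Fin m) (Fin m) ℂ) (h1 : Q * R = 1)
    (h2 : R * Q = 1) : (Fin m → ℂ) ≃ₗ[ℂ] (Fin m → ℂ) :=
  LinearEquiv.ofLinear (mulVecLin Q) (mulVecLin R)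
    (by rw [← mulVecLin_mul, h1, mulVecLin_one]) (by rw [← mulVecLin_mul, h2, mulVecLin_one])

@[simp] lemma mulVecEquiv_apply (Q R : Matrix (Fin m) (Fin m) ℂ) (h1 h2) (y : Fin m → ℂ) :
    mulVecEquiv Q R h1 h2 y = Q *ᵥ y := rfl

lemma form_congr (Q A : Matrix (Fin m) (Fin m) ℂ) (y : Fin m → ℂ) :
    star (Q *ᵥ y) ⬝ᵥ (A *ᵥ (Q *ᵥ y)) = star y ⬝ᵥ ((Qᴴ * A * Q) *ᵥ y) := by
  rw [star_mulVec, mulVec_mulVec, dotProduct_mulVec, vecMul_vecMul,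
    dotProduct_mulVec, mul_assoc]

lemma re_form_diagonal (d : Fin m → ℝ) (y : Fin m → ℂ) :
    (star y ⬝ᵥ (diagonal (RCLike.ofReal ∘ d) *ᵥ y)).re
      = ∑ i, d i * Complex.normSq (y i) := by
  rw [dotProduct, Complex.re_sum]
  congr 1; ext i
  have : (star y) i * (diagonal (RCLike.ofReal ∘ d) *ᵥ y) i
      = ((d i : ℂ)) * ((Complex.normSq (y i) : ℂ)) := by
    simp only [mulVec_diagonal, Pi.star_apply, Function.comp]
    rw [Complex.normSq_eq_conj_mul_self]
    simp only [RCLike.star_def, RCLike.ofReal_alg, Complex.real_smul, Complex.ofReal_one, mul_one]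
    ring
  rw [this, ← Complex.ofReal_mul, Complex.ofReal_re]

/-- For any index set `S` there is a subspace of dimension `S.card` on which the quadratic
form of `A` is given by the eigenvalues indexed by `S`. -/
lemma exists_eig_span {A : Matrix (Fin m) (Fin m) ℂ} (hA : A.IsHermitian) (S : Finset (Fin m)) :
    ∃ N : Submodule ℂ (Fin m → ℂ), Module.finrank ℂ N = S.card ∧
      ∀ x ∈ N, ∃ y : Fin m → ℂ, (∀ j ∉ S, y j = 0) ∧ (x ≠ 0 → y ≠ 0) ∧
        (star x ⬝ᵥ (A *ᵥ x)).re = ∑ i, hA.eigenvalues i * Complex.normSq (y i) := by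
  set U : Matrix (Fin m) (Fin m) ℂ := (hA.eigenvectorUnitary : Matrix (Fin m) (Fin m) ℂ) with hU
  have h1 : U * star U = 1 := Unitary.mul_star_self_of_mem hA.eigenvectorUnitary.2
  have h2 : star U * U = 1 := Unitary.star_mul_self_of_mem hA.eigenvectorUnitary.2
  set e := mulVecEquiv U (star U) h1 h2
  refine ⟨(coordSub S).map e.toLinearMap, ?_, ?_⟩
  · rw [LinearEquiv.finrank_map_eq, coordSub_finrank]
  · rintro x hx
    obtain ⟨y, hy, rfl⟩ := Submodule.mem_map.mp hx
    refine ⟨y, fun j hj => coordSub_apply_eq_zero hy hj, fun hx0 hy0 => hx0 (by simp [hy0]), ?_⟩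
    show (star (U *ᵥ y) ⬝ᵥ (A *ᵥ (U *ᵥ y))).re = _
    have hd : Uᴴ * A * U = diagonal (RCLike.ofReal ∘ hA.eigenvalues) :=
      by
        have := hA.conjStarAlgAut_star_eigenvectorUnitary
        rw [Unitary.conjStarAlgAut_apply, Unitary.coe_star, star_star] at this
        exact this
    rw [form_congr, hd, re_form_diagonal]

lemma exists_pos_subspace {A : Matrix (Fin m) (Fin m) ℂ} (hA : A.IsHermitian) :
    ∃ W : Submodule ℂ (Fin m → ℂ),
      Module.finrank ℂ W = (Finset.univ.filter fun i => 0 < hA.eigenvalues i).card ∧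
      ∀ x ∈ W, x ≠ 0 → 0 < (star x ⬝ᵥ (A *ᵥ x)).re := by
  obtain ⟨N, hdim, hform⟩ := exists_eig_span hA (Finset.univ.filter fun i => 0 < hA.eigenvalues i)
  refine ⟨N, hdim, fun x hx hx0 => ?_⟩
  obtain ⟨y, hy0, hyne, hre⟩ := hform x hx
  rw [hre]
  obtain ⟨j, hj⟩ := Function.ne_iff.mp (hyne hx0)
  have hjS : 0 < hA.eigenvalues j := by
    by_contra h
    exact hj (hy0 j (by simp [h]))
  refine Finset.sum_pos' (fun i _ => ?_) ⟨j, Finset.mem_univ j, ?_⟩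
  · by_cases hiS : 0 < hA.eigenvalues i
    · exact mul_nonneg hiS.le (Complex.normSq_nonneg _)
    · rw [hy0 i (by simp [hiS]), Complex.normSq_zero, mul_zero]
  · have : 0 < Complex.normSq (y j) := by
      simpa [Complex.normSq_pos] using hj
    exact mul_pos hjS this

lemma finrank_le_card_pos {A : Matrix (Fin m) (Fin m) ℂ} (hA : A.IsHermitian)
    (W : Submodule ℂ (Fin m → ℂ)) (hW : ∀ x ∈ W, x ≠ 0 → 0 < (star x ⬝ᵥ (A *ᵥ x)).re) :
    Module.finrank ℂ W ≤ (Finset.univ.filter fun i => 0 < hA.eigenvalues i).card := by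
  by_contra hlt
  push_neg at hlt
  set S := Finset.univ.filter fun i => 0 < hA.eigenvalues i with hS
  set T := Finset.univ.filter fun i => hA.eigenvalues i ≤ 0 with hT
  have hcard : S.card + T.card = m := by
    simpa using Finset.card_filter_add_card_filter_not
      (s := (Finset.univ : Finset (Fin m))) (p := fun i => 0 < hA.eigenvalues i)
  obtain ⟨N, hNdim, hNform⟩ := exists_eig_span hA T
  -- W ⊓ N is nontrivial
  have htop : Module.finrank ℂ (W ⊔ N : Submodule ℂ (Fin m → ℂ)) ≤ m := by
    simpa [Module.finrank_fintype_fun_eq_card] using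
      (W ⊔ N).finrank_le
  have hsum := Submodule.finrank_sup_add_finrank_inf_eq W N
  have hpos : 0 < Module.finrank ℂ (W ⊓ N : Submodule ℂ (Fin m → ℂ)) := by omega
  have : (W ⊓ N : Submodule ℂ (Fin m → ℂ)) ≠ ⊥ := by
    intro h
    rw [h, finrank_bot] at hpos
    exact lt_irrefl 0 hpos
  obtain ⟨x, hxmem, hx0⟩ := Submodule.exists_mem_ne_zero_of_ne_bot this
  have hxW : x ∈ W := hxmem.1
  have hxN : x ∈ N := hxmem.2
  have h1 : 0 < (star x ⬝ᵥ (A *ᵥ x)).re := hW x hxW hx0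
  obtain ⟨y, hy0, _, hre⟩ := hNform x hxN
  have h2 : (star x ⬝ᵥ (A *ᵥ x)).re ≤ 0 := by
    rw [hre]
    refine Finset.sum_nonpos fun i _ => ?_
    by_cases hiT : i ∈ T
    · exact mul_nonpos_of_nonpos_of_nonneg (Finset.mem_filter.mp hiT).2 (Complex.normSq_nonneg _)
    · rw [hy0 i hiT, Complex.normSq_zero, mul_zero]
  linarith

/-- Implication C ⟹ B in Lemma 4.1 of the paper: let `P` be Hermitian and `β`
positive definite Hermitian (`m×m`), and let the generalized eigenvalues of `P`
with respect to `β` be the eigenvalues of `β^{-1/2} P β^{-1/2}`.  If the sum of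
any `m - k + 1` of them is positive (`1 ≤ k ≤ m`), then `P` has at least `k`
positive eigenvalues. -/
theorem stmt6 (m k : ℕ) (hk1 : 1 ≤ k) (hkm : k ≤ m)
    (P β : Matrix (Fin m) (Fin m) ℂ) (hP : P.IsHermitian) (hβ : β.PosDef)
    (hC : ((hβ.posSemidef.sqrt)⁻¹ * P * (hβ.posSemidef.sqrt)⁻¹).IsHermitian)
    (hsum : ∀ s : Finset (Fin m), s.card = m - k + 1 →
      0 < ∑ j ∈ s, hC.eigenvalues j) :
    k ≤ (Finset.univ.filter fun i => 0 < hP.eigenvalues i).card := by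
  classical
  have hsdet : IsUnit (hβ.posSemidef.sqrt).det := by
    have hβdet : IsUnit β.det := isUnit_iff_ne_zero.mpr hβ.det_pos.ne'
    have hm : (hβ.posSemidef.sqrt).det * (hβ.posSemidef.sqrt).det = β.det := by
      rw [← det_mul, hβ.posSemidef.sqrt_mul_self]
    exact (IsUnit.mul_iff.mp (hm ▸ hβdet)).1
  have h1 : (hβ.posSemidef.sqrt)⁻¹ * hβ.posSemidef.sqrt = 1 := nonsing_inv_mul _ hsdet
  have h2 : hβ.posSemidef.sqrt * (hβ.posSemidef.sqrt)⁻¹ = 1 := mul_nonsing_inv _ hsdet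
  have hQH : ((hβ.posSemidef.sqrt)⁻¹)ᴴ = (hβ.posSemidef.sqrt)⁻¹ :=
    hβ.posSemidef.sqrt_isHermitian.inv
  -- Step 1: the congruenced matrix has at least `k` positive eigenvalues
  have hk_le_pM : k ≤ (Finset.univ.filter fun i => 0 < hC.eigenvalues i).card := by
    by_contra h
    push_neg at h
    set T := Finset.univ.filter fun i => hC.eigenvalues i ≤ 0 with hT
    have hcard : (Finset.univ.filter fun i => 0 < hC.eigenvalues i).card + T.card = m := by
      simpa using Finset.card_filter_add_card_filter_not
        (s := (Finset.univ : Finset (Fin m))) (p := fun i => 0 < hC.eigenvalues i)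
    have hle : m - k + 1 ≤ T.card := by omega
    obtain ⟨s, hsT, hscard⟩ := Finset.exists_subset_card_eq (s := T) (n := m - k + 1) hle
    have hpos := hsum s hscard
    have h0 : ∑ j ∈ s, hC.eigenvalues j ≤ 0 :=
      Finset.sum_nonpos fun j hj => (Finset.mem_filter.mp (hsT hj)).2
    linarith
  -- Step 2: transfer via the congruence
  obtain ⟨W, hWdim, hWpos⟩ := exists_pos_subspace hC
  set e := mulVecEquiv ((hβ.posSemidef.sqrt)⁻¹) hβ.posSemidef.sqrt h1 h2 with he
  have hW'dim : Module.finrank ℂ (W.map e.toLinearMap) = Module.finrank ℂ W :=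
    LinearEquiv.finrank_map_eq e W
  have hW'pos : ∀ x ∈ W.map e.toLinearMap, x ≠ 0 → 0 < (star x ⬝ᵥ (P *ᵥ x)).re := by
    rintro x hx hx0
    obtain ⟨y, hy, rfl⟩ := Submodule.mem_map.mp hx
    have hy0 : y ≠ 0 := fun h => hx0 (by simp [h])
    have hcongr : star ((hβ.posSemidef.sqrt)⁻¹ *ᵥ y) ⬝ᵥ (P *ᵥ ((hβ.posSemidef.sqrt)⁻¹ *ᵥ y))
        = star y ⬝ᵥ (((hβ.posSemidef.sqrt)⁻¹ * P * (hβ.posSemidef.sqrt)⁻¹) *ᵥ y) := by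
      have h3 := form_congr ((hβ.posSemidef.sqrt)⁻¹) P y
      rwa [hQH] at h3
    show 0 < (star ((hβ.posSemidef.sqrt)⁻¹ *ᵥ y) ⬝ᵥ
      (P *ᵥ ((hβ.posSemidef.sqrt)⁻¹ *ᵥ y))).re
    rw [hcongr]
    exact hWpos y hy hy0
  have hfin := finrank_le_card_pos hP (W.map e.toLinearMap) hW'pos
  omega
end

section
/- If P is a Hermitian m×m matrix, β is a positive definite Hermitian m×m matrix, and ψ : ℝ → ℝ is any function with ψ > 0 on the spectrum of β^{-1/2}Pβ^{-1/2}, then the matrix ψ(P; β) := β^{1/2} ψ(β^{-1/2} P β^{-1/2}) β^{1/2} is positive definite, and the generalized eigenvalues of P with respect to ψ(P; β) are exactly γ_j/ψ(γ_j), where γ_j are the generalized eigenvalues of P with respect to β. -/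
open Matrix ComplexOrder

/-- Functional calculus of a Hermitian matrix via the spectral theorem:
`ψ(M) = U diag(ψ(λ_i)) U*` where `M = U diag(λ_i) U*`. -/
noncomputable def hermFunCalc {m : ℕ} {M : Matrix (Fin m) (Fin m) ℂ}
    (hM : M.IsHermitian) (ψ : ℝ → ℝ) : Matrix (Fin m) (Fin m) ℂ :=
  (hM.eigenvectorUnitary : Matrix (Fin m) (Fin m) ℂ)
    * Matrix.diagonal (fun i => (ψ (hM.eigenvalues i) : ℂ))
    * star (hM.eigenvectorUnitary : Matrix (Fin m) (Fin m) ℂ)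

noncomputable def posSemidefSqrt {m : ℕ} {A : Matrix (Fin m) (Fin m) ℂ}
    (hA : A.PosSemidef) : Matrix (Fin m) (Fin m) ℂ :=
  (hA.1.eigenvectorUnitary : Matrix (Fin m) (Fin m) ℂ)
    * Matrix.diagonal ((↑) ∘ (Real.sqrt ·) ∘ hA.1.eigenvalues)
    * (star hA.1.eigenvectorUnitary : Matrix (Fin m) (Fin m) ℂ)

lemma posSemidefSqrt_posSemidef {m : ℕ} {A : Matrix (Fin m) (Fin m) ℂ} (hA : A.PosSemidef) :
    (posSemidefSqrt hA).PosSemidef := by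
  have hd : (Matrix.diagonal ((↑) ∘ (Real.sqrt ·) ∘ hA.1.eigenvalues) :
      Matrix (Fin m) (Fin m) ℂ).PosSemidef :=
    PosSemidef.diagonal fun i => by simp [Real.sqrt_nonneg]
  unfold posSemidefSqrt
  rw [star_eq_conjTranspose]
  exact hd.mul_mul_conjTranspose_same _

lemma posSemidefSqrt_mul_self {m : ℕ} {A : Matrix (Fin m) (Fin m) ℂ} (hA : A.PosSemidef) :
    posSemidefSqrt hA * posSemidefSqrt hA = A := by
  have hU := Unitary.coe_star_mul_self hA.1.eigenvectorUnitary
  unfold posSemidefSqrt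
  conv_rhs => rw [hA.1.spectral_theorem, Unitary.conjStarAlgAut_apply]
  simp only [mul_assoc]
  rw [← mul_assoc _ (hA.1.eigenvectorUnitary : Matrix (Fin m) (Fin m) ℂ), hU, one_mul,
    ← mul_assoc (Matrix.diagonal _), diagonal_mul_diagonal]
  congr 3
  funext i
  simp only [Function.comp_apply]
  rw [← Complex.ofReal_mul, Real.mul_self_sqrt (hA.eigenvalues_nonneg i)]
  rfl


-- Aux A: permutation from equal multisets
lemma exists_perm_of_multiset_map_eq {n : ℕ} {α : Type*} [LinearOrder α] {f g : Fin n → α}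
    (h : Multiset.map f Finset.univ.val = Multiset.map g Finset.univ.val) :
    ∃ σ : Equiv.Perm (Fin n), ∀ i, f i = g (σ i) := by
  have huniv : (Finset.univ.val : Multiset (Fin n)) = ↑(List.finRange n) := rfl
  have hmf : ∀ (f : Fin n → α) (σ : Equiv.Perm (Fin n)),
      (↑(List.ofFn (f ∘ σ)) : Multiset α) = Multiset.map f Finset.univ.val := by
    intro f σ
    rw [huniv, Multiset.map_coe, ← List.ofFn_eq_map, Multiset.coe_eq_coe]
    exact Equiv.Perm.ofFn_comp_perm σ f
  have hperm : (List.ofFn (f ∘ Tuple.sort f)).Perm (List.ofFn (g ∘ Tuple.sort g)) := by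
    rw [← Multiset.coe_eq_coe, hmf, hmf, h]
  have heq : List.ofFn (f ∘ Tuple.sort f) = List.ofFn (g ∘ Tuple.sort g) :=
    List.Perm.eq_of_sortedLE
      (List.sortedLE_ofFn_iff.2 (Tuple.monotone_sort f))
      (List.sortedLE_ofFn_iff.2 (Tuple.monotone_sort g)) hperm
  have heq' : f ∘ Tuple.sort f = g ∘ Tuple.sort g := List.ofFn_injective heq
  refine ⟨(Tuple.sort f).symm.trans (Tuple.sort g), fun i => ?_⟩
  have := congrFun heq' ((Tuple.sort f).symm i)
  simpa using this

variable {n : Type*} [Fintype n] [DecidableEq n]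

lemma posDef_conj {A B : Matrix n n ℂ} (hA : A.PosDef) (hB : IsUnit B) :
    (B * A * Bᴴ).PosDef :=
  hA.mul_mul_conjTranspose_same (Matrix.vecMul_injective_iff_isUnit.mpr hB)

lemma posDef_of_posSemidef_isUnit {A : Matrix n n ℂ} (hA : A.PosSemidef) (hu : IsUnit A) :
    A.PosDef := hA.posDef_iff_isUnit.mpr hu

lemma sqrt_posDef {m : ℕ} {A : Matrix (Fin m) (Fin m) ℂ} (hA : A.PosDef) :
    (posSemidefSqrt hA.posSemidef).PosDef := by
  refine posDef_of_posSemidef_isUnit (posSemidefSqrt_posSemidef hA.posSemidef) ?_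
  have h : IsUnit ((posSemidefSqrt hA.posSemidef).det * (posSemidefSqrt hA.posSemidef).det) := by
    rw [← Matrix.det_mul, posSemidefSqrt_mul_self]
    exact (Matrix.isUnit_iff_isUnit_det A).1 hA.isUnit
  exact (Matrix.isUnit_iff_isUnit_det _).2 (isUnit_of_mul_isUnit_left h)

variable {n : Type*} [Fintype n] [DecidableEq n]

open Polynomial in
lemma charpoly_units_conj (B A : Matrix n n ℂ) (hB : IsUnit B.det) :
    (B * A * B⁻¹).charpoly = A.charpoly := by
  have hBB : B * B⁻¹ = 1 := mul_nonsing_inv B hB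
  set B' : Matrix n n ℂ[X] := B.map C with hB'
  set B'' : Matrix n n ℂ[X] := (B⁻¹).map C with hB''
  have hmap : ∀ (M N : Matrix n n ℂ), (M * N).map (C : ℂ →+* ℂ[X]) = M.map C * N.map C :=
    fun M N => Matrix.map_mul
  have h1 : B' * B'' = 1 := by
    rw [hB', hB'', ← hmap, hBB]
    ext i j
    simp [Matrix.map_apply, Matrix.one_apply, apply_ite]
  have hcm : charmatrix (B * A * B⁻¹) = B' * charmatrix A * B'' := by
    show Matrix.scalar n (X : ℂ[X]) - (C : ℂ →+* ℂ[X]).mapMatrix (B * A * B⁻¹) = _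
    have h2 : (C : ℂ →+* ℂ[X]).mapMatrix (B * A * B⁻¹) = B' * (C : ℂ →+* ℂ[X]).mapMatrix A * B'' := by
      simp only [RingHom.mapMatrix_apply, hmap, hB', hB'']
    rw [h2]
    have h3 : B' * Matrix.scalar n (X : ℂ[X]) * B'' = Matrix.scalar n (X : ℂ[X]) := by
      rw [← (scalar_commute (X : ℂ[X]) (Commute.all X) B').eq, mul_assoc, h1, mul_one]
    rw [← h3, charmatrix]
    noncomm_ring
  have h1' : B'' * B' = 1 := by
    rw [hB', hB'', ← hmap, nonsing_inv_mul B hB]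
    ext i j
    simp [Matrix.map_apply, Matrix.one_apply, apply_ite]
  rw [Matrix.charpoly, hcm, Matrix.charpoly, det_mul, det_mul, mul_comm,
    ← mul_assoc, ← det_mul, h1']
  simp

open Polynomial in
lemma charpoly_diagonal (d : n → ℂ) :
    (Matrix.diagonal d).charpoly = ∏ i, (X - C (d i)) := by
  have : charmatrix (Matrix.diagonal d) = Matrix.diagonal (fun i => X - C (d i)) := by
    ext i j
    by_cases h : i = j
    · subst h; simp [charmatrix_apply_eq]
    · simp [charmatrix_apply_ne _ _ _ h, Matrix.diagonal_apply_ne _ h]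
  rw [Matrix.charpoly, this, det_diagonal]

open Polynomial in
lemma eigenvalues_of_unitary_diag {m : ℕ} {A V : Matrix (Fin m) (Fin m) ℂ} (hA : A.IsHermitian)
    (hV : star V * V = 1) (μ : Fin m → ℝ)
    (hAV : A = V * Matrix.diagonal (fun i => (μ i : ℂ)) * star V) :
    ∃ σ : Equiv.Perm (Fin m), ∀ i, hA.eigenvalues i = μ (σ i) := by
  have hprod : ∀ (W : Matrix (Fin m) (Fin m) ℂ) (f : Fin m → ℝ), star W * W = 1 →
      A = W * Matrix.diagonal (fun i => (f i : ℂ)) * star W →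
      A.charpoly = ∏ i, (X - C ((f i : ℝ) : ℂ)) := by
    intro W f hW hAW
    have hW2 : W * star W = 1 := mul_eq_one_comm.mp hW
    have hWdet : IsUnit W.det := by
      apply IsUnit.of_mul_eq_one (star W).det
      rw [← det_mul, hW2, det_one]
    have hWinv : W⁻¹ = star W := inv_eq_right_inv hW2
    rw [hAW, ← hWinv, charpoly_units_conj _ _ hWdet, _root_.charpoly_diagonal]
  have c1 : A.charpoly = ∏ i, (X - C ((μ i : ℝ) : ℂ)) := hprod V μ hV hAV
  have hU : star (hA.eigenvectorUnitary : Matrix (Fin m) (Fin m) ℂ)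
      * (hA.eigenvectorUnitary : Matrix (Fin m) (Fin m) ℂ) = 1 :=
    (Unitary.mem_iff.mp hA.eigenvectorUnitary.2).1
  have c2 : A.charpoly = ∏ i, (X - C ((hA.eigenvalues i : ℝ) : ℂ)) := by
    apply hprod _ _ hU
    have := hA.spectral_theorem
    rw [Unitary.conjStarAlgAut_apply] at this
    exact this
  have hroots : ∀ f : Fin m → ℝ,
      (∏ i, (X - C ((f i : ℝ) : ℂ))).roots
        = Multiset.map (fun i => ((f i : ℝ) : ℂ)) Finset.univ.val := by
    intro f
    have h2 := Polynomial.roots_multiset_prod_X_sub_C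
      (Multiset.map (fun i => ((f i : ℝ) : ℂ)) Finset.univ.val)
    rw [Multiset.map_map] at h2
    rw [← h2]
    congr 1
  have hms : Multiset.map (fun i => ((hA.eigenvalues i : ℝ) : ℂ)) Finset.univ.val
      = Multiset.map (fun i => ((μ i : ℝ) : ℂ)) Finset.univ.val := by
    rw [← hroots, ← hroots, ← c1, ← c2]
  have hmsr : Multiset.map hA.eigenvalues Finset.univ.val
      = Multiset.map μ Finset.univ.val := by
    apply Multiset.map_injective Complex.ofReal_injective
    rw [Multiset.map_map, Multiset.map_map]
    exact hms
  exact exists_perm_of_multiset_map_eq hmsr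

set_option maxHeartbeats 2000000 in
/-- Matrix-level content of the construction `β = ψ_ε(Θ_H)` in Lemma 4.1: for
`P` Hermitian, `β` positive definite Hermitian, and `ψ : ℝ → ℝ` positive on the
spectrum of `C = β^{-1/2} P β^{-1/2}`, the matrix
`ψ(P; β) = β^{1/2} ψ(C) β^{1/2}` is positive definite, and the generalized
eigenvalues of `P` with respect to `ψ(P; β)` are exactly the values
`γ_j / ψ(γ_j)` where `γ_j` are the generalized eigenvalues of `P` w.r.t. `β`
(exactness expressed via a permutation of indices). -/
theorem stmt15 (m : ℕ) (P β : Matrix (Fin m) (Fin m) ℂ)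
    (hP : P.IsHermitian) (hβ : β.PosDef)
    (hC : ((posSemidefSqrt hβ.posSemidef)⁻¹ * P * (posSemidefSqrt hβ.posSemidef)⁻¹).IsHermitian)
    (ψ : ℝ → ℝ) (hψ : ∀ i, 0 < ψ (hC.eigenvalues i)) :
    (posSemidefSqrt hβ.posSemidef * hermFunCalc hC ψ * posSemidefSqrt hβ.posSemidef).PosDef ∧
    ∀ (hQ : (posSemidefSqrt hβ.posSemidef * hermFunCalc hC ψ * posSemidefSqrt hβ.posSemidef).PosDef)
      (hD : ((posSemidefSqrt hQ.posSemidef)⁻¹ * P * (posSemidefSqrt hQ.posSemidef)⁻¹).IsHermitian),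
      ∃ σ : Equiv.Perm (Fin m), ∀ i,
        hD.eigenvalues i = hC.eigenvalues (σ i) / ψ (hC.eigenvalues (σ i)) := by
  classical
  have hS : (posSemidefSqrt hβ.posSemidef).PosDef := sqrt_posDef hβ
  set S : Matrix (Fin m) (Fin m) ℂ := posSemidefSqrt hβ.posSemidef with hSdef
  have hSH : Sᴴ = S := (posSemidefSqrt_posSemidef hβ.posSemidef).1
  have hSdet : IsUnit S.det := (Matrix.isUnit_iff_isUnit_det _).1 hS.isUnit
  set U : Matrix (Fin m) (Fin m) ℂ := (hC.eigenvectorUnitary : Matrix (Fin m) (Fin m) ℂ)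
    with hUdef
  have hU1 : star U * U = 1 := (Unitary.mem_iff.mp hC.eigenvectorUnitary.2).1
  have hU2 : U * star U = 1 := (Unitary.mem_iff.mp hC.eigenvectorUnitary.2).2
  set lam : Fin m → ℝ := hC.eigenvalues with hlamdef
  set dψ : Matrix (Fin m) (Fin m) ℂ := Matrix.diagonal (fun i => (ψ (lam i) : ℂ)) with hdψdef
  have hψCdef : hermFunCalc hC ψ = U * dψ * star U := rfl
  -- Part 1 : positive definiteness
  have hdψ : dψ.PosDef := by
    refine Matrix.PosDef.diagonal fun i => ?_
    exact_mod_cast hψ i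
  have hψC : (hermFunCalc hC ψ).PosDef := by
    rw [hψCdef]
    have hUdet : IsUnit U.det := IsUnit.of_mul_eq_one (star U).det
      (by rw [← Matrix.det_mul, hU2, Matrix.det_one])
    have := posDef_conj hdψ ((Matrix.isUnit_iff_isUnit_det U).2 hUdet)
    simpa [Matrix.star_eq_conjTranspose] using this
  have hQ0 : (S * hermFunCalc hC ψ * S).PosDef := by
    have := posDef_conj hψC hS.isUnit
    rwa [hSH] at this
  refine ⟨hQ0, ?_⟩
  intro hQ hD
  have hT : (posSemidefSqrt hQ.posSemidef).PosDef := sqrt_posDef hQ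
  set T : Matrix (Fin m) (Fin m) ℂ := posSemidefSqrt hQ.posSemidef with hTdef
  have hTH : Tᴴ = T := (posSemidefSqrt_posSemidef hQ.posSemidef).1
  have hTdet : IsUnit T.det := (Matrix.isUnit_iff_isUnit_det _).1 hT.isUnit
  have hTT : T * T = S * hermFunCalc hC ψ * S := posSemidefSqrt_mul_self hQ.posSemidef
  set dsψ : Matrix (Fin m) (Fin m) ℂ :=
    Matrix.diagonal (fun i => ((Real.sqrt (ψ (lam i)) : ℝ) : ℂ)) with hdsψdef
  set dμ : Matrix (Fin m) (Fin m) ℂ :=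
    Matrix.diagonal (fun i => ((lam i / ψ (lam i) : ℝ) : ℂ)) with hdμdef
  set dlam : Matrix (Fin m) (Fin m) ℂ :=
    Matrix.diagonal (fun i => ((lam i : ℝ) : ℂ)) with hdlamdef
  set V : Matrix (Fin m) (Fin m) ℂ := T⁻¹ * S * U * dsψ with hVdef
  -- basic collapse lemmas
  have c_SS : ∀ Z, S * (S⁻¹ * Z) = Z := fun Z => by
    rw [← mul_assoc, mul_nonsing_inv _ hSdet, one_mul]
  have c_SS' : ∀ Z, S⁻¹ * (S * Z) = Z := fun Z => by
    rw [← mul_assoc, nonsing_inv_mul _ hSdet, one_mul]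
  have c_UU : ∀ Z, star U * (U * Z) = Z := fun Z => by
    rw [← mul_assoc, hU1, one_mul]
  have c_UU' : ∀ Z, U * (star U * Z) = Z := fun Z => by
    rw [← mul_assoc, hU2, one_mul]
  have hdψinv : dψ⁻¹ = Matrix.diagonal (fun i => ((ψ (lam i) : ℂ))⁻¹) := by
    apply Matrix.inv_eq_right_inv
    rw [hdψdef, Matrix.diagonal_mul_diagonal, ← Matrix.diagonal_one,
      Matrix.diagonal_eq_diagonal_iff]
    intro i
    exact mul_inv_cancel₀ (Complex.ofReal_ne_zero.mpr (hψ i).ne')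
  have hψCinv : (hermFunCalc hC ψ)⁻¹ = U * (dψ⁻¹ * star U) := by
    rw [hψCdef, Matrix.mul_inv_rev, Matrix.mul_inv_rev,
      Matrix.inv_eq_left_inv hU2, Matrix.inv_eq_left_inv hU1]
  have c_TT : ∀ Z, T⁻¹ * (T⁻¹ * Z) = S⁻¹ * (U * (dψ⁻¹ * (star U * (S⁻¹ * Z)))) := by
    intro Z
    rw [← mul_assoc, ← Matrix.mul_inv_rev, hTT, Matrix.mul_inv_rev, Matrix.mul_inv_rev, hψCinv]
    simp only [mul_assoc]
  -- diagonal computations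
  have hdd1 : dsψ * (dψ⁻¹ * dsψ) = 1 := by
    rw [hdψinv, hdsψdef, Matrix.diagonal_mul_diagonal, Matrix.diagonal_mul_diagonal,
      ← Matrix.diagonal_one, Matrix.diagonal_eq_diagonal_iff]
    intro i
    have hx : (0:ℝ) < ψ (lam i) := hψ i
    have hr : Real.sqrt (ψ (lam i)) * ((ψ (lam i))⁻¹ * Real.sqrt (ψ (lam i))) = 1 := by
      rw [mul_comm ((ψ (lam i)))⁻¹, ← mul_assoc, Real.mul_self_sqrt hx.le,
        mul_inv_cancel₀ hx.ne']
    exact_mod_cast congrArg (Complex.ofReal) hr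
  have hdd2 : dsψ * dμ * dsψ = dlam := by
    rw [hdsψdef, hdμdef, hdlamdef, Matrix.diagonal_mul_diagonal, Matrix.diagonal_mul_diagonal,
      Matrix.diagonal_eq_diagonal_iff]
    intro i
    have hx : (0:ℝ) < ψ (lam i) := hψ i
    have hr : Real.sqrt (ψ (lam i)) * (lam i / ψ (lam i)) * Real.sqrt (ψ (lam i)) = lam i := by
      rw [mul_right_comm, Real.mul_self_sqrt hx.le, mul_comm, div_mul_cancel₀ _ hx.ne']
    exact_mod_cast congrArg (Complex.ofReal) hr
  have c_dd2 : ∀ Z, dsψ * (dμ * (dsψ * Z)) = dlam * Z := fun Z => by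
    rw [← mul_assoc, ← mul_assoc, hdd2]
  -- spectral theorem for C
  have hspec : (S⁻¹ * P * S⁻¹) = U * dlam * star U := by
    have h := hC.spectral_theorem
    rw [Unitary.conjStarAlgAut_apply] at h
    exact h
  have c_spec : ∀ Z, U * (dlam * (star U * Z)) = S⁻¹ * (P * (S⁻¹ * Z)) := fun Z => by
    conv_rhs => rw [← mul_assoc, ← mul_assoc, hspec]
    simp only [mul_assoc]
  -- star V
  have hstarV : star V = dsψ * (star U * (S * T⁻¹)) := by
    rw [hVdef]
    have hdsH : dsψᴴ = dsψ := by
      rw [hdsψdef, Matrix.diagonal_conjTranspose, Matrix.diagonal_eq_diagonal_iff]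
      intro i
      simp [Complex.conj_ofReal]
    simp only [Matrix.star_eq_conjTranspose, Matrix.conjTranspose_mul,
      Matrix.conjTranspose_nonsing_inv, hSH, hTH, hdsH, mul_assoc]
  -- V is unitary
  have hVV : star V * V = 1 := by
    rw [hstarV, hVdef]
    simp only [mul_assoc]
    rw [c_TT, c_SS, c_UU, c_SS', c_UU, hdd1]
  -- D = V dμ V*
  have hDV : T⁻¹ * P * T⁻¹ = V * dμ * star V := by
    rw [hstarV, hVdef]
    simp only [mul_assoc]
    rw [c_dd2, c_spec, c_SS, c_SS']
  obtain ⟨σ, hσ⟩ := eigenvalues_of_unitary_diag hD hVV (fun i => lam i / ψ (lam i)) hDV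
  exact ⟨σ, fun i => hσ i⟩
end
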